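/- arXiv:2504.02741 — 2 statements merged into one kernel-verified Lean document; each statement's English description precedes it below -/
import Mathlib

section
/- Let A_k be the k-fold convolution of x ↦ e^{-2π|x|} with itself, and let r_k be the polynomials defined by the generating series ∑_{k≥0} q^k r_k(X) = e^{(1-√(1-q))X}/√(1-q). Then for every k ≥ 1 and every real x, A_k(x) = e^{-2π|x|} π^{1-k} r_{k-1}(2π|x|). -/
/-!
For `0 < t < 1` let `G_t = ∑ₖ (tπ)ᵏ A_{k+1}`. The recursion `A_{k+2} = A_{k+1} ⋆ A₁` gives
`G_t = A₁ + tπ (G_t ⋆ A₁)`; since `∫ A₁ = 1/π`, the map `F ↦ tπ (F ⋆ A₁)` is a contraction on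
bounded functions, so `G_t` is the only bounded solution. A direct computation of
`e^{-a|·|} ⋆ e^{-b|·|}` shows that `e^{-2π√(1-t)|x|}/√(1-t)` is also a solution. Multiplied by
`e^{2π|x|}` this is the generating function of the `r_k` at `X = 2π|x|`, `q = t`, and comparing
coefficients of the two power series in `t` (identity theorem) gives the formula.
-/

open Real MeasureTheory Complex Polynomial

/-- `Ak n` is the `(n+1)`-fold self-convolution of `x ↦ e^{-2π|x|}`,
so `Ak 0 = A₁` and `Ak n = A_{n+1}` in the paper's notation. -/
noncomputable def Ak : ℕ → ℝ → ℝ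
  | 0, x => Real.exp (-2 * π * |x|)
  | (n + 1), x => ∫ y : ℝ, Ak n (x - y) * Real.exp (-2 * π * |y|)

open Set Filter Topology

lemma eq_of_hasSum_pow_mul {a b : ℕ → ℝ} {f : ℝ → ℝ} {ε : ℝ} (hε : 0 < ε)
    (ha : ∀ t ∈ Ioo 0 ε, HasSum (fun k => t ^ k * a k) (f t))
    (hb : ∀ t ∈ Ioo 0 ε, HasSum (fun k => t ^ k * b k) (f t)) : a = b := by
  set p := FormalMultilinearSeries.ofScalars ℝ (a - b)
  have hsum : ∀ t ∈ Ioo 0 ε, HasSum (fun k => t ^ k * (a k - b k)) 0 := fun t ht => by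
    simpa [mul_sub] using (ha t ht).sub (hb t ht)
  have hrad : 0 < p.radius := by
    obtain ⟨t, ht⟩ := nonempty_Ioo.2 hε
    refine lt_of_lt_of_le ?_ (p.le_radius_of_summable_norm (r := ⟨t, ht.1.le⟩) ?_)
    · exact ENNReal.coe_pos.2 ht.1
    · refine (hsum t ht).summable.abs.congr fun n => ?_
      simp [p, abs_mul, abs_of_pos ht.1]
      exact mul_comm _ _
  have hzero : ∀ t ∈ Ioo 0 ε, p.sum t = 0 := fun t ht => by
    simpa [FormalMultilinearSeries.sum, p] using (hsum t ht).tsum_eq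
  have hev : p.sum =ᶠ[𝓝 0] 0 := by
    refine (p.hasFPowerSeriesOnBall hrad).analyticAt.frequently_zero_iff_eventually_zero.1 ?_
    exact (eventually_of_mem (Ioo_mem_nhdsGT hε) hzero).frequently.filter_mono
      (nhdsGT_le_nhdsNE 0)
  have hp : p = 0 := ((p.hasFPowerSeriesOnBall hrad).hasFPowerSeriesAt.congr hev).eq_zero
  exact sub_eq_zero.1 ((FormalMultilinearSeries.ofScalars_series_eq_zero ℝ).1 hp)

/-- `z ≠ 0` rules out the junk value `0` of a non-summable `tsum`. -/
lemma hasSum_of_tsum_ofReal_eq {ι : Type*} {f : ι → ℝ} {z : ℝ} (hz : z ≠ 0)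
    (h : ∑' k, (f k : ℂ) = z) : HasSum f z := by
  have hf : Summable fun k => (f k : ℂ) := by
    by_contra hf
    rw [tsum_eq_zero_of_not_summable hf] at h
    exact hz (Complex.ofReal_eq_zero.1 h.symm)
  exact Complex.hasSum_ofReal.1 (h ▸ hf.hasSum)

section ExpAbs

variable {a b : ℝ}

lemma integrable_exp_neg_mul_abs (hb : 0 < b) : Integrable fun x : ℝ => Real.exp (-b * |x|) := by
  rw [← integrableOn_univ, ← Iic_union_Ioi (a := 0), integrableOn_union]
  refine ⟨(integrableOn_exp_mul_Iic hb 0).congr_fun (fun x hx => ?_) measurableSet_Iic,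
    (integrableOn_exp_mul_Ioi (neg_lt_zero.2 hb) 0).congr_fun (fun x hx => ?_) measurableSet_Ioi⟩
  · rw [abs_of_nonpos hx, mul_neg, neg_mul, neg_neg]
  · rw [abs_of_pos hx]

lemma integral_exp_neg_mul_abs (hb : 0 < b) : ∫ x : ℝ, Real.exp (-b * |x|) = 2 / b := by
  rw [integral_comp_abs (f := fun x => Real.exp (-b * x)),
    integral_exp_mul_Ioi (neg_lt_zero.2 hb)]
  field_simp
  simp

lemma integral_exp_mul {c : ℝ} (hc : c ≠ 0) (x₁ x₂ : ℝ) :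
    ∫ y in x₁..x₂, Real.exp (c * y) = (Real.exp (c * x₂) - Real.exp (c * x₁)) / c := by
  rw [intervalIntegral.integral_comp_mul_left (fun y => Real.exp y) hc, integral_exp]
  simp [div_eq_inv_mul]

lemma integral_exp_neg_mul_abs_sub_mul_exp_neg_mul_abs_of_nonneg (ha : 0 < a) (hb : 0 < b)
    (hab : a ≠ b) {x : ℝ} (hx : 0 ≤ x) :
    ∫ y, Real.exp (-a * |x - y|) * Real.exp (-b * |y|)
      = (2 * a * Real.exp (-b * x) - 2 * b * Real.exp (-a * x)) / (a ^ 2 - b ^ 2) := by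
  set f : ℝ → ℝ := fun y => Real.exp (-a * |x - y|) * Real.exp (-b * |y|)
  have hf : Integrable f := by
    refine (integrable_exp_neg_mul_abs hb).bdd_mul (c := 1) (by fun_prop)
      (ae_of_all _ fun y => ?_)
    rw [Real.norm_eq_abs, abs_of_pos (Real.exp_pos _), Real.exp_le_one_iff]
    nlinarith [abs_nonneg (x - y)]
  have left : ∫ y in Iic 0, f y = Real.exp (-a * x) * (Real.exp ((a + b) * 0) / (a + b)) := by
    rw [← integral_exp_mul_Iic (by linarith : 0 < a + b), ← integral_const_mul]
    refine setIntegral_congr_fun measurableSet_Iic fun y (hy : y ≤ 0) => ?_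
    simp only [f, abs_of_nonneg (by linarith : 0 ≤ x - y), abs_of_nonpos hy, ← Real.exp_add]
    ring_nf
  have middle : ∫ y in (0 : ℝ)..x, f y
      = Real.exp (-a * x) * ((Real.exp ((a - b) * x) - Real.exp ((a - b) * 0)) / (a - b)) := by
    rw [← integral_exp_mul (sub_ne_zero.2 hab), ← intervalIntegral.integral_const_mul]
    refine intervalIntegral.integral_congr fun y hy => ?_
    rw [uIcc_of_le hx] at hy
    simp only [f, abs_of_nonneg (by linarith [hy.2] : 0 ≤ x - y), abs_of_nonneg hy.1,
      ← Real.exp_add]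
    ring_nf
  have right : ∫ y in Ioi x, f y = Real.exp (a * x) * (-Real.exp (-(a + b) * x) / -(a + b)) := by
    rw [← integral_exp_mul_Ioi (by linarith : -(a + b) < 0), ← integral_const_mul]
    refine setIntegral_congr_fun measurableSet_Ioi fun y (hy : x < y) => ?_
    simp only [f, abs_of_neg (by linarith : x - y < 0), abs_of_pos (by linarith : 0 < y),
      ← Real.exp_add]
    ring_nf
  rw [← intervalIntegral.integral_Iic_add_Ioi hf.integrableOn hf.integrableOn,
    ← intervalIntegral.integral_interval_add_Ioi hf.integrableOn hf.integrableOn,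
    left, middle, right]
  simp only [mul_zero, Real.exp_zero]
  have : a + b ≠ 0 := by linarith
  have : a - b ≠ 0 := sub_ne_zero.2 hab
  have : a ^ 2 - b ^ 2 ≠ 0 := by rw [sq_sub_sq]; positivity
  rw [show Real.exp ((a - b) * x) = Real.exp (-b * x) / Real.exp (-a * x) by
      rw [← Real.exp_sub]; ring_nf,
    show Real.exp (-(a + b) * x) = Real.exp (-b * x) * Real.exp (-a * x) by
      rw [← Real.exp_add]; ring_nf,
    show Real.exp (a * x) = (Real.exp (-a * x))⁻¹ by rw [← Real.exp_neg]; ring_nf]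
  field_simp
  ring

lemma integral_exp_neg_mul_abs_sub_mul_exp_neg_mul_abs (ha : 0 < a) (hb : 0 < b)
    (hab : a ≠ b) (x : ℝ) :
    ∫ y, Real.exp (-a * |x - y|) * Real.exp (-b * |y|)
      = (2 * a * Real.exp (-b * |x|) - 2 * b * Real.exp (-a * |x|)) / (a ^ 2 - b ^ 2) := by
  rcases le_or_gt 0 x with hx | hx
  · rw [abs_of_nonneg hx]
    exact integral_exp_neg_mul_abs_sub_mul_exp_neg_mul_abs_of_nonneg ha hb hab hx
  · rw [abs_of_neg hx, ← integral_exp_neg_mul_abs_sub_mul_exp_neg_mul_abs_of_nonneg ha hb hab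
      (neg_nonneg.2 hx.le),
      ← integral_neg_eq_self fun y => Real.exp (-a * |-x - y|) * Real.exp (-b * |y|)]
    congr 1 with y
    rw [abs_neg, show -x - -y = -(x - y) by ring, abs_neg]

end ExpAbs

lemma Ak_zero : Ak 0 = fun x => Real.exp (-(2 * π) * |x|) := by
  ext x
  rw [Ak, neg_mul]

lemma Ak_succ (n : ℕ) (x : ℝ) : Ak (n + 1) x = ∫ y, Ak n (x - y) * Ak 0 y := rfl

lemma integrable_Ak_zero : Integrable (Ak 0) :=
  Ak_zero ▸ integrable_exp_neg_mul_abs (by positivity)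

lemma integral_Ak_zero : ∫ x, Ak 0 x = π⁻¹ := by
  rw [Ak_zero, integral_exp_neg_mul_abs (by positivity)]
  field_simp

lemma Ak_zero_nonneg (x : ℝ) : 0 ≤ Ak 0 x := (Real.exp_pos _).le

lemma abs_integral_comp_sub_mul_Ak_zero_le {F : ℝ → ℝ} {M : ℝ} (hF : ∀ x, |F x| ≤ M) (x : ℝ) :
    |∫ y, F (x - y) * Ak 0 y| ≤ M * π⁻¹ := by
  rw [← integral_Ak_zero, ← integral_const_mul, ← Real.norm_eq_abs]
  refine norm_integral_le_of_norm_le (integrable_Ak_zero.const_mul M) (ae_of_all _ fun y => ?_)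
  rw [Real.norm_eq_abs, abs_mul, abs_of_nonneg (Ak_zero_nonneg y)]
  exact mul_le_mul_of_nonneg_right (hF _) (Ak_zero_nonneg y)

lemma integrable_comp_sub_mul_Ak_zero {F : ℝ → ℝ} (hF : Continuous F) {M : ℝ}
    (hM : ∀ x, |F x| ≤ M) (x : ℝ) : Integrable fun y => F (x - y) * Ak 0 y :=
  integrable_Ak_zero.bdd_mul (c := M) (by fun_prop) (ae_of_all _ fun y => hM (x - y))

lemma Ak_nonneg (n : ℕ) (x : ℝ) : 0 ≤ Ak n x := by
  induction n generalizing x with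
  | zero => exact Ak_zero_nonneg x
  | succ n ih => exact integral_nonneg fun y => mul_nonneg (ih _) (Ak_zero_nonneg y)

lemma Ak_le (n : ℕ) (x : ℝ) : Ak n x ≤ π⁻¹ ^ n := by
  induction n generalizing x with
  | zero =>
    simp only [Ak_zero, pow_zero, Real.exp_le_one_iff]
    nlinarith [pi_pos, abs_nonneg x]
  | succ n ih =>
    refine (le_abs_self _).trans ((abs_integral_comp_sub_mul_Ak_zero_le (M := π⁻¹ ^ n)
      (fun y => ?_) x).trans_eq (pow_succ _ _).symm)
    rw [abs_of_nonneg (Ak_nonneg n y)]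
    exact ih y

lemma abs_Ak_le (n : ℕ) (x : ℝ) : |Ak n x| ≤ π⁻¹ ^ n :=
  (abs_of_nonneg (Ak_nonneg n x)).trans_le (Ak_le n x)

lemma Ak_succ_eq_convolution (n : ℕ) :
    Ak (n + 1) = convolution (Ak 0) (Ak n) (ContinuousLinearMap.mul ℝ ℝ) volume := by
  ext x
  simp [Ak_succ, convolution, mul_comm]

lemma continuous_Ak (n : ℕ) : Continuous (Ak n) := by
  induction n with
  | zero => rw [Ak_zero]; fun_prop
  | succ n ih =>
    rw [Ak_succ_eq_convolution]
    refine BddAbove.continuous_convolution_right_of_integrable _ ?_ integrable_Ak_zero ih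
    exact ⟨π⁻¹ ^ n, by rintro _ ⟨x, rfl⟩; exact abs_Ak_le n x⟩

lemma eq_zero_of_eq_mul_integral_comp_sub_mul_Ak_zero {D : ℝ → ℝ} {M c : ℝ}
    (hM : ∀ x, |D x| ≤ M) (hc0 : 0 ≤ c) (hc : c < π)
    (hD : ∀ x, D x = c * ∫ y, D (x - y) * Ak 0 y) : D = 0 := by
  have hθ1 : c * π⁻¹ < 1 := by rwa [mul_inv_lt_iff₀ pi_pos, one_mul]
  have hbound : ∀ n x, |D x| ≤ M * (c * π⁻¹) ^ n := by
    intro n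
    induction n with
    | zero => simpa using hM
    | succ n ih =>
      intro x
      rw [hD x, abs_mul, abs_of_nonneg hc0]
      calc c * |∫ y, D (x - y) * Ak 0 y| ≤ c * (M * (c * π⁻¹) ^ n * π⁻¹) :=
            mul_le_mul_of_nonneg_left (abs_integral_comp_sub_mul_Ak_zero_le ih x) hc0
        _ = M * (c * π⁻¹) ^ (n + 1) := by ring
  have hlim : Tendsto (fun n => M * (c * π⁻¹) ^ n) atTop (𝓝 0) := by
    simpa using (tendsto_pow_atTop_nhds_zero_of_lt_one (by positivity) hθ1).const_mul M
  ext x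
  exact abs_nonpos_iff.1 (ge_of_tendsto' hlim fun n => hbound n x)

lemma exp_neg_mul_abs_div_eq_add {s : ℝ} (hs0 : 0 < s) (hs1 : s < 1) (x : ℝ) :
    Real.exp (-(2 * π * s) * |x|) / s
      = Ak 0 x + (1 - s ^ 2) * π * ∫ y, Real.exp (-(2 * π * s) * |x - y|) / s * Ak 0 y := by
  have hne : 2 * π * s ≠ 2 * π := by
    intro h
    nlinarith [pi_pos]
  simp_rw [div_mul_eq_mul_div, integral_div, Ak_zero,
    integral_exp_neg_mul_abs_sub_mul_exp_neg_mul_abs (by positivity) (by positivity) hne x]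
  have : s ^ 2 - 1 ≠ 0 := by nlinarith
  field_simp
  ring

noncomputable def AkGenFun (t x : ℝ) : ℝ := ∑' k, (t * π) ^ k * Ak k x

section AkGenFun

variable {t : ℝ}

lemma pow_mul_Ak_nonneg (ht : 0 ≤ t) (k : ℕ) (x : ℝ) : 0 ≤ (t * π) ^ k * Ak k x := by
  have := Ak_nonneg k x
  positivity

lemma pow_mul_Ak_le (ht : 0 ≤ t) (k : ℕ) (x : ℝ) : (t * π) ^ k * Ak k x ≤ t ^ k :=
  calc (t * π) ^ k * Ak k x ≤ (t * π) ^ k * π⁻¹ ^ k :=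
        mul_le_mul_of_nonneg_left (Ak_le k x) (by positivity)
    _ = t ^ k := by rw [← mul_pow, mul_assoc, mul_inv_cancel₀ pi_ne_zero, mul_one]

lemma summable_pow_mul_Ak (ht0 : 0 ≤ t) (ht1 : t < 1) (x : ℝ) :
    Summable fun k => (t * π) ^ k * Ak k x :=
  (summable_geometric_of_lt_one ht0 ht1).of_nonneg_of_le (pow_mul_Ak_nonneg ht0 · x)
    (pow_mul_Ak_le ht0 · x)

lemma continuous_AkGenFun (ht0 : 0 ≤ t) (ht1 : t < 1) : Continuous (AkGenFun t) :=
  continuous_tsum (fun k => (continuous_Ak k).const_mul _)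
    (summable_geometric_of_lt_one ht0 ht1) fun k x => by
      rw [Real.norm_eq_abs, abs_of_nonneg (pow_mul_Ak_nonneg ht0 k x)]
      exact pow_mul_Ak_le ht0 k x

lemma abs_AkGenFun_le (ht0 : 0 ≤ t) (ht1 : t < 1) (x : ℝ) : |AkGenFun t x| ≤ (1 - t)⁻¹ := by
  rw [AkGenFun, abs_of_nonneg (tsum_nonneg (pow_mul_Ak_nonneg ht0 · x)),
    ← tsum_geometric_of_lt_one ht0 ht1]
  exact (summable_pow_mul_Ak ht0 ht1 x).tsum_le_tsum (pow_mul_Ak_le ht0 · x)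
    (summable_geometric_of_lt_one ht0 ht1)

lemma AkGenFun_eq_add (ht0 : 0 ≤ t) (ht1 : t < 1) (x : ℝ) :
    AkGenFun t x = Ak 0 x + t * π * ∫ y, AkGenFun t (x - y) * Ak 0 y := by
  set F : ℕ → ℝ → ℝ := fun k y => (t * π) ^ (k + 1) * (Ak k (x - y) * Ak 0 y)
  have hF : ∀ k, ∫ y, F k y = (t * π) ^ (k + 1) * Ak (k + 1) x := fun k =>
    integral_const_mul _ _
  have hF_int : ∀ k, Integrable (F k) := fun k =>
    (integrable_comp_sub_mul_Ak_zero (continuous_Ak k) (abs_Ak_le k) x).const_mul _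
  have hF_norm : ∀ k, ∫ y, ‖F k y‖ = ∫ y, F k y := fun k =>
    integral_congr_ae (ae_of_all _ fun y => Real.norm_of_nonneg (by
      have := Ak_nonneg k (x - y); have := Ak_zero_nonneg y; positivity))
  have hF_sum : Summable fun k => ∫ y, ‖F k y‖ := by
    simp_rw [hF_norm, hF]
    exact (summable_nat_add_iff 1).2 (summable_pow_mul_Ak ht0 ht1 x)
  calc AkGenFun t x = Ak 0 x + ∑' k, (t * π) ^ (k + 1) * Ak (k + 1) x := by
        rw [AkGenFun, (summable_pow_mul_Ak ht0 ht1 x).tsum_eq_zero_add, pow_zero, one_mul]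
    _ = Ak 0 x + ∫ y, ∑' k, F k y := by
        simp_rw [← hF]
        rw [integral_tsum_of_summable_integral_norm hF_int hF_sum]
    _ = Ak 0 x + t * π * ∫ y, AkGenFun t (x - y) * Ak 0 y := by
        rw [← integral_const_mul]
        congr 2 with y
        simp only [F, AkGenFun, ← tsum_mul_left, ← tsum_mul_right]
        congr 1 with k
        ring

lemma AkGenFun_eq (ht0 : 0 < t) (ht1 : t < 1) (x : ℝ) :
    AkGenFun t x = Real.exp (-(2 * π * √(1 - t)) * |x|) / √(1 - t) := by
  set s := √(1 - t)
  have hs0 : 0 < s := Real.sqrt_pos.2 (by linarith)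
  have hs2 : s ^ 2 = 1 - t := Real.sq_sqrt (by linarith)
  have hs1 : s < 1 := by nlinarith
  set H : ℝ → ℝ := fun x => Real.exp (-(2 * π * s) * |x|) / s
  have hH : ∀ x, |H x| ≤ s⁻¹ := fun x => by
    simp only [H]
    rw [abs_of_nonneg (by positivity), div_eq_mul_inv]
    refine mul_le_of_le_one_left (by positivity) (Real.exp_le_one_iff.2 ?_)
    have : 0 ≤ 2 * π * s * |x| := by positivity
    linarith
  have hcont : Continuous H := by fun_prop
  suffices AkGenFun t - H = 0 from sub_eq_zero.1 (congrFun this x)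
  refine eq_zero_of_eq_mul_integral_comp_sub_mul_Ak_zero (M := (1 - t)⁻¹ + s⁻¹) (c := t * π)
    (fun x => (abs_sub _ _).trans (add_le_add (abs_AkGenFun_le ht0.le ht1 x) (hH x)))
    (by positivity) (by nlinarith [pi_pos]) fun x => ?_
  have hG := integrable_comp_sub_mul_Ak_zero (continuous_AkGenFun ht0.le ht1)
    (abs_AkGenFun_le ht0.le ht1) x
  have hH' := integrable_comp_sub_mul_Ak_zero hcont hH x
  simp only [Pi.sub_apply, sub_mul]
  rw [integral_sub hG hH', AkGenFun_eq_add ht0.le ht1]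
  simp only [H]
  rw [exp_neg_mul_abs_div_eq_add hs0 hs1, hs2]
  ring

lemma hasSum_pow_mul_Ak (ht0 : 0 < t) (ht1 : t < 1) (x : ℝ) :
    HasSum (fun k => (t * π) ^ k * Ak k x) (Real.exp (-(2 * π * √(1 - t)) * |x|) / √(1 - t)) :=
  AkGenFun_eq ht0 ht1 x ▸ (summable_pow_mul_Ak ht0.le ht1 x).hasSum

end AkGenFun

lemma hasSum_pow_mul_aeval {r : ℕ → ℚ[X]} {X t : ℝ} (ht : t < 1)
    (h : ∑' k, (t : ℂ) ^ k * aeval (X : ℂ) (r k)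
      = Complex.exp ((1 - (1 - t) ^ ((1 : ℂ) / 2)) * X) / (1 - t) ^ ((1 : ℂ) / 2)) :
    HasSum (fun k => t ^ k * aeval X (r k)) (Real.exp ((1 - √(1 - t)) * X) / √(1 - t)) := by
  have hsqrt : (1 - (t : ℂ)) ^ ((1 : ℂ) / 2) = (√(1 - t) : ℂ) := by
    rw [Real.sqrt_eq_rpow, Complex.ofReal_cpow (by linarith)]
    norm_num
  have hs : 0 < √(1 - t) := Real.sqrt_pos.2 (by linarith)
  refine hasSum_of_tsum_ofReal_eq (by positivity) ?_
  convert h using 1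
  · congr 1 with k
    simp [← Complex.coe_algebraMap, aeval_algebraMap_apply]
  · rw [hsqrt]
    norm_num

theorem Ak_eq_exp_mul_poly (r : ℕ → Polynomial ℚ)
    (hr : ∀ (X : ℝ) (q : ℂ), ‖q‖ < 1 →
      ∑' k : ℕ, q ^ k * Polynomial.aeval (X : ℂ) (r k)
        = Complex.exp ((1 - (1 - q) ^ ((1 : ℂ) / 2)) * X) / (1 - q) ^ ((1 : ℂ) / 2)) :
    ∀ (n : ℕ) (x : ℝ),
      Ak n x = Real.exp (-2 * π * |x|) * (π ^ n)⁻¹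
        * Polynomial.aeval (2 * π * |x|) (r n) := by
  intro n x
  have hcoeff : (fun k => aeval (2 * π * |x|) (r k))
      = fun k => π ^ k * Real.exp (2 * π * |x|) * Ak k x := by
    refine eq_of_hasSum_pow_mul one_pos (fun t ht => hasSum_pow_mul_aeval ht.2 (hr _ _ ?_))
      fun t ht => ?_
    · rw [Complex.norm_real, Real.norm_eq_abs, abs_of_pos ht.1]
      exact ht.2
    · have h := (hasSum_pow_mul_Ak ht.1 ht.2 x).mul_left (Real.exp (2 * π * |x|))
      rw [mul_div_assoc', ← Real.exp_add,
        show 2 * π * |x| + -(2 * π * √(1 - t)) * |x| = (1 - √(1 - t)) * (2 * π * |x|) by ring] at h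
      exact h.congr_fun fun k => by ring
  rw [congrFun hcoeff n, show -2 * π * |x| = -(2 * π * |x|) by ring, Real.exp_neg]
  field_simp
end

section
/- Let F be holomorphic on the upper half-plane ℂ⁺ of the form F(z) = ((z²+1)^m/(2πi)) ∫_ℝ ((1+tz)/(t−z)) dμ(t)/(1+t²)^{m+1} + iQ(z), where μ is a real signed measure with ∫(1+t²)^{-(m+1)}d|μ| < ∞ and Q is a real polynomial of degree ≤ 2m+1 with leading coefficient a_{2m+1}. Then lim_{y→∞} y^{-(2m+1)} Re F(iy) = (−1)^{m+1} a_{2m+1}; in particular the leading coefficient a_{2m+1} is uniquely determined by F. -/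
open Real MeasureTheory Complex Filter Polynomial Topology

/-!
On the imaginary axis `(z² + 1)^m = (1 - y²)^m` is real and
`Im ((1 + t·iy)/(t - iy)) = y (1 + t²)/(t² + y²)`, so after division by `y^(2m+1)` the integral
term of `Re F(iy)` is `(1 - y²)^m / y^(2m) / (2π)` times
`∫ (1 + t²)/(t² + y²) dμ(t)/(1 + t²)^(m+1)`. The first factor tends to `(-1)^m` and the integral
to `0` by dominated convergence, the integrand being bounded by `(1 + t²)^-(m+1)` for `y ≥ 1`.
What survives is `Re (i Q(iy)) / y^(2m+1)`, whose limit is the coefficient of `y^(2m+1)` in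
`Re (i Q(iy))`, namely `Re (i^(2m+2)) a_(2m+1)`.
-/

lemma norm_kernel_I_mul_le {y : ℝ} (hy : 1 ≤ y) (t : ℝ) :
    ‖(1 + t * (I * y)) / ((t : ℂ) - I * y)‖ ≤ y := by
  have hnum : (1 : ℂ) + t * (I * y) = (1 : ℝ) + (t * y : ℝ) * I := by push_cast; ring
  have hden : (t : ℂ) - I * y = t + (-y : ℝ) * I := by push_cast; ring
  have hden_pos : 0 < ‖(t : ℂ) - I * y‖ := norm_pos_iff.mpr fun h => by
    simpa [(one_pos.trans_le hy).ne'] using congrArg im h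
  rw [norm_div, div_le_iff₀ hden_pos, ← sq_le_sq₀ (norm_nonneg _) (by positivity), mul_pow,
    ← normSq_eq_norm_sq, ← normSq_eq_norm_sq, hnum, hden, normSq_add_mul_I, normSq_add_mul_I]
  nlinarith [sq_nonneg t, mul_le_mul hy hy zero_le_one (by linarith : (0 : ℝ) ≤ y)]

lemma im_kernel_I_mul (t y : ℝ) :
    ((1 + t * (I * y)) / ((t : ℂ) - I * y)).im = y * (1 + t ^ 2) / (t ^ 2 + y ^ 2) := by
  rw [div_im]
  simp only [add_im, one_im, mul_im, ofReal_re, I_re, ofReal_im, mul_zero, I_im, one_mul, zero_add,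
    mul_re, zero_mul, sub_self, add_zero, sub_re, sub_zero, normSq_apply, sub_im, zero_sub, mul_neg,
    neg_mul, neg_neg, add_re, one_re]
  ring

section
variable {μ : Measure ℝ} {w : ℝ → ℝ}

lemma integrable_kernel_I_mul {y : ℝ} (hy : 1 ≤ y) (hw : Integrable w μ) :
    Integrable (fun t : ℝ => (1 + t * (I * y)) / ((t : ℂ) - I * y) * w t) μ := by
  have hmeas : Measurable fun t : ℝ => (1 + t * (I * y)) / ((t : ℂ) - I * y) := by fun_prop
  exact hw.ofReal.bdd_mul hmeas.aestronglyMeasurable (ae_of_all _ (norm_kernel_I_mul_le hy))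

lemma im_integral_kernel_I_mul {y : ℝ} (hy : 1 ≤ y) (hw : Integrable w μ) :
    (∫ t, (1 + t * (I * y)) / ((t : ℂ) - I * y) * w t ∂μ).im
      = y * ∫ t, (1 + t ^ 2) / (t ^ 2 + y ^ 2) * w t ∂μ := by
  rw [← integral_const_mul, ← RCLike.im_to_complex,
    ← integral_im (integrable_kernel_I_mul hy hw)]
  congr 1 with t
  simp only [RCLike.im_to_complex, im_mul_ofReal, im_kernel_I_mul]
  ring

lemma tendsto_integral_div_sq_add_sq_atTop (hw : Integrable w μ) :
    Tendsto (fun y => ∫ t, (1 + t ^ 2) / (t ^ 2 + y ^ 2) * w t ∂μ) atTop (𝓝 0) := by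
  rw [← integral_zero ℝ ℝ]
  have hmeas (y : ℝ) : Measurable fun t : ℝ => (1 + t ^ 2) / (t ^ 2 + y ^ 2) := by fun_prop
  refine tendsto_integral_filter_of_dominated_convergence (fun t => |w t|)
    (Eventually.of_forall fun y => (hmeas y).aestronglyMeasurable.mul hw.aestronglyMeasurable) ?_
    hw.abs (ae_of_all _ fun t => ?_)
  · filter_upwards [eventually_ge_atTop 1] with y hy
    refine ae_of_all _ fun t => ?_
    rw [norm_mul, Real.norm_eq_abs, Real.norm_eq_abs, abs_of_nonneg (by positivity)]
    refine mul_le_of_le_one_left (abs_nonneg _) (div_le_one_of_le₀ ?_ (by positivity))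
    nlinarith
  · simpa using (tendsto_atTop_add_const_left _ (t ^ 2) (tendsto_pow_atTop two_ne_zero))
      |>.const_div_atTop (1 + t ^ 2) |>.mul_const (w t)

end

lemma re_ofReal_div_mul_I_mul (r c : ℝ) (W : ℂ) :
    ((r : ℂ) / (c * I) * W).re = r / c * W.im := by
  have h : (r : ℂ) / (c * I) = ((r / c : ℝ) : ℂ) * -I := by
    rw [div_mul_eq_div_div, div_I]; push_cast; ring
  rw [h, mul_assoc, re_ofReal_mul]
  simp

lemma tendsto_one_sub_sq_pow_div_pow_atTop (m : ℕ) :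
    Tendsto (fun y : ℝ => (1 - y ^ 2) ^ m / y ^ (2 * m)) atTop (𝓝 ((-1) ^ m)) := by
  have h : Tendsto (fun y : ℝ => ((y ^ 2)⁻¹ - 1) ^ m) atTop (𝓝 ((0 - 1) ^ m)) :=
    ((tendsto_inv_atTop_zero.comp (tendsto_pow_atTop two_ne_zero)).sub_const 1).pow m
  refine (zero_sub (1 : ℝ) ▸ h).congr' ?_
  filter_upwards [eventually_ne_atTop 0] with y hy
  rw [pow_mul, ← div_pow]
  field_simp

lemma tendsto_sum_mul_pow_div_pow_atTop (c : ℕ → ℝ) (n : ℕ) :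
    Tendsto (fun y : ℝ => (∑ k ∈ Finset.range (n + 1), c k * y ^ k) / y ^ n) atTop
      (𝓝 (c n)) := by
  have hlow :
      Tendsto (fun y : ℝ => (∑ k ∈ Finset.range n, c k * y ^ k) / y ^ n) atTop (𝓝 0) := by
    simp_rw [Finset.sum_div, mul_div_assoc]
    simpa using tendsto_finsetSum (Finset.range n) fun k hk =>
      (tendsto_pow_div_pow_atTop_zero (Finset.mem_range.mp hk)).const_mul (c k)
  have htop : (fun _ : ℝ => c n) =ᶠ[atTop] fun y => c n * y ^ n / y ^ n := by
    filter_upwards [eventually_ne_atTop 0] with y hy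
    field_simp
  simpa [Finset.sum_range_succ, add_div] using hlow.add (tendsto_const_nhds.congr' htop)

lemma re_I_mul_aeval_I_mul {Q : ℝ[X]} {n : ℕ} (hQ : Q.natDegree < n) (y : ℝ) :
    (I * aeval (I * y) Q).re = ∑ k ∈ Finset.range n, (I ^ (k + 1)).re * Q.coeff k * y ^ k := by
  rw [aeval_eq_sum_range' hQ, Finset.mul_sum, re_sum]
  refine Finset.sum_congr rfl fun k _ => ?_
  rw [show I * (Q.coeff k • (I * y) ^ k) = ((Q.coeff k * y ^ k : ℝ) : ℂ) * I ^ (k + 1) by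
    rw [Complex.real_smul]; push_cast; ring, re_ofReal_mul]
  ring

lemma tendsto_re_I_mul_aeval_div_pow_atTop {Q : ℝ[X]} {n : ℕ} (hQ : Q.natDegree ≤ n) :
    Tendsto (fun y : ℝ => (I * aeval (I * y) Q).re / y ^ n) atTop
      (𝓝 ((I ^ (n + 1)).re * Q.coeff n)) := by
  simp_rw [re_I_mul_aeval_I_mul (Nat.lt_succ_of_le hQ)]
  exact tendsto_sum_mul_pow_div_pow_atTop (fun k => (I ^ (k + 1)).re * Q.coeff k) n

lemma tendsto_re_cauchyTerm_div_pow_atTop (m : ℕ) {μ : Measure ℝ}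
    (hμ : Integrable (fun t : ℝ => ((1 + t ^ 2) ^ (m + 1))⁻¹) μ) :
    Tendsto (fun y : ℝ => ((((I * y) ^ 2 + 1) ^ m / (2 * π * I)) *
        ∫ t : ℝ, ((1 + t * (I * y)) / ((t : ℂ) - I * y)) * (((1 + (t : ℂ) ^ 2) ^ (m + 1))⁻¹)
          ∂μ).re / y ^ (2 * m + 1)) atTop (𝓝 0) := by
  have h := ((tendsto_one_sub_sq_pow_div_pow_atTop m).mul
    (tendsto_integral_div_sq_add_sq_atTop hμ)).div_const (2 * π)
  rw [mul_zero, zero_div] at h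
  refine h.congr' ?_
  filter_upwards [eventually_ge_atTop 1] with y hy
  have hweight (t : ℝ) : ((1 + (t : ℂ) ^ 2) ^ (m + 1))⁻¹ =
      ((((1 + t ^ 2) ^ (m + 1))⁻¹ : ℝ) : ℂ) := by
    push_cast; rfl
  have hfactor : ((I * y) ^ 2 + 1) ^ m / (2 * π * I) =
      ((1 - y ^ 2) ^ m : ℝ) / ((2 * π : ℝ) * I) := by
    rw [mul_pow, I_sq]; push_cast; ring
  simp_rw [hweight, hfactor, re_ofReal_div_mul_I_mul, im_integral_kernel_I_mul hy hμ]
  have hy0 : y ≠ 0 := by positivity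
  field_simp
  ring

theorem leading_coeff_determined (m : ℕ) (s : MeasureTheory.SignedMeasure ℝ)
    (hint : MeasureTheory.Integrable (fun t : ℝ => ((1 + t ^ 2) ^ (m + 1))⁻¹)
      s.totalVariation)
    (Q : Polynomial ℝ) (hQ : Q.degree ≤ 2 * m + 1)
    (F : ℂ → ℂ)
    (hF : ∀ z : ℂ, 0 < z.im →
      F z = ((z ^ 2 + 1) ^ m / (2 * π * Complex.I)) *
          ((∫ t : ℝ, ((1 + t * z) / ((t : ℂ) - z)) * (((1 + (t : ℂ) ^ 2) ^ (m + 1))⁻¹)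
              ∂s.toJordanDecomposition.posPart)
            - ∫ t : ℝ, ((1 + t * z) / ((t : ℂ) - z)) * (((1 + (t : ℂ) ^ 2) ^ (m + 1))⁻¹)
              ∂s.toJordanDecomposition.negPart)
        + Complex.I * Polynomial.aeval z (Q.map (algebraMap ℝ ℂ))) :
    Tendsto (fun y : ℝ => (F (Complex.I * y)).re / y ^ (2 * m + 1)) atTop
      (nhds ((-1 : ℝ) ^ (m + 1) * Q.coeff (2 * m + 1))) := by
  obtain ⟨hpos, hneg⟩ := integrable_add_measure.mp hint
  have hlead : (I ^ (2 * m + 1 + 1)).re = (-1) ^ (m + 1) := by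
    rw [show 2 * m + 1 + 1 = 2 * (m + 1) by ring, pow_mul, I_sq]
    norm_cast
  have h := ((tendsto_re_cauchyTerm_div_pow_atTop m hpos).sub
    (tendsto_re_cauchyTerm_div_pow_atTop m hneg)).add
    (tendsto_re_I_mul_aeval_div_pow_atTop (n := 2 * m + 1)
      (natDegree_le_iff_degree_le.mpr (mod_cast hQ)))
  rw [sub_zero, zero_add, hlead] at h
  refine h.congr' ?_
  filter_upwards [eventually_gt_atTop 0] with y hy
  rw [hF _ (by simpa using hy), aeval_map_algebraMap, mul_sub, add_re, sub_re]
  ring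
end
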